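/- A binary relation r on a finite set V contains a cycle (some element is related to itself by the transitive closure of r) if and only if there exist a set C ⊆ V of 'cycle nodes' and a set of 'cycle edges' F ⊆ r such that: (1) C is nonempty, (2) every edge (e₁,e₂) ∈ F satisfies e₁ ∈ C and e₂ ∈ C, and (3) every node in C has at least one incoming edge in F and at least one outgoing edge in F. -/
import Mathlib


theorem cycle_iff_guessed_cycle
    {V : Type*} [Fintype V] (r : V → V → Prop) :
    (∃ v : V, Relation.TransGen r v v) ↔
      ∃ (C : Set V) (F : V → V → Prop),
        C.Nonempty ∧
        (∀ e₁ e₂, F e₁ e₂ → r e₁ e₂) ∧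
        (∀ e₁ e₂, F e₁ e₂ → e₁ ∈ C ∧ e₂ ∈ C) ∧
        (∀ v ∈ C, (∃ u, F u v) ∧ (∃ u, F v u)) := by
  constructor
  · rintro ⟨v, hv⟩
    set C : Set V := {u | Relation.TransGen r v u ∧ Relation.TransGen r u v} with hC
    have hvC : v ∈ C := ⟨hv, hv⟩
    refine ⟨C, fun a b => r a b ∧ a ∈ C ∧ b ∈ C, ⟨v, hvC⟩, fun _ _ h => h.1,
      fun _ _ h => h.2, fun u hu => ?_⟩
    constructor
    · obtain ⟨w, hvw, hwu⟩ := Relation.TransGen.tail'_iff.mp hu.1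
      have hwC : w ∈ C := by
        refine ⟨?_, Relation.TransGen.head hwu hu.2⟩
        rcases (Relation.reflTransGen_iff_eq_or_transGen.mp hvw) with h | h
        · exact h ▸ hv
        · exact h
      exact ⟨w, hwu, hwC, hu⟩
    · obtain ⟨w, huw, hwv⟩ := Relation.TransGen.head'_iff.mp hu.2
      have hwC : w ∈ C := by
        refine ⟨hu.1.tail huw, ?_⟩
        rcases (Relation.reflTransGen_iff_eq_or_transGen.mp hwv) with h | h
        · exact h ▸ hv
        · exact h
      exact ⟨w, huw, hu, hwC⟩
  · rintro ⟨C, F, ⟨v₀, hv₀⟩, hFr, hFC, hdeg⟩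
    have step : ∀ u ∈ C, ∃ w, F u w ∧ w ∈ C := by
      intro u hu
      obtain ⟨w, hw⟩ := (hdeg u hu).2
      exact ⟨w, hw, (hFC _ _ hw).2⟩
    choose nxt hnxt hnxtC using step
    let f : ℕ → {x // x ∈ C} := fun n => Nat.rec ⟨v₀, hv₀⟩ (fun _ p => ⟨nxt p.1 p.2, hnxtC p.1 p.2⟩) n
    have hstep : ∀ n, F (f n).1 (f (n+1)).1 := fun n => hnxt _ _
    have htg : ∀ m n, m < n → Relation.TransGen r (f m).1 (f n).1 := by
      intro m n h
      induction n with
      | zero => omega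
      | succ k ih =>
        rcases Nat.lt_succ_iff_lt_or_eq.mp h with h' | h'
        · exact (ih h').tail (hFr _ _ (hstep k))
        · subst h'; exact Relation.TransGen.single (hFr _ _ (hstep _))
    obtain ⟨m, n, hne, heq⟩ := Finite.exists_ne_map_eq_of_infinite f
    rcases Nat.lt_or_ge m n with h | h
    · exact ⟨(f m).1, (congrArg Subtype.val heq) ▸ htg m n h⟩
    · exact ⟨(f n).1, (congrArg Subtype.val heq) ▸ htg n m (lt_of_le_of_ne h (Ne.symm hne))⟩
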